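/- Under concordance ordering with equal Y margins, Marginal Expected Shortfall is monotone: if (X,Y) and (X',Y') have copulas C ⪯ C' with F_X, F_{X'} continuous, F_Y = F_{Y'}, and E|Y| < ∞, then MES_α(Y|X) := E[Y | X ≥ VaR_α(X)] ≤ E[Y' | X' ≥ VaR_α(X')] = MES_α(Y'|X') for all α ∈ (0,1). -/

import Mathlib

/-!
With `F_X` continuous, the tail `{VaR_α(X) ≤ X}` has mass exactly `1 - α`, and by Sklar's identity
the law of `Y` restricted to it has distribution function `F_Y - C(α, F_Y)`. Since `C ≤ C'` and
`F_Y = F_{Y'}`, the tail law of `Y'` dominates that of `Y` stochastically while both carry the same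
mass, so by the layer-cake formula for the positive and negative parts the tail integral of `Y` is
at most that of `Y'`; dividing by `1 - α` gives the MES inequality.
-/

open MeasureTheory Set

/-- Generalized inverse F^←(p) = inf {x : F x ≥ p}. -/
noncomputable def qf (F : ℝ → ℝ) (p : ℝ) : ℝ := sInf {x | p ≤ F x}

/-- Distribution function of a random variable. -/
noncomputable def rvCdf {Ω : Type*} [MeasurableSpace Ω] (μ : Measure Ω) (X : Ω → ℝ) (x : ℝ) : ℝ :=
  (μ {ω | X ω ≤ x}).toReal

/-- Marginal Expected Shortfall MES_α(Y|X) = E[Y | X ≥ VaR_α(X)]. -/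
noncomputable def MES {Ω : Type*} [MeasurableSpace Ω] (μ : Measure Ω) (X Y : Ω → ℝ)
    (α : ℝ) : ℝ :=
  (∫ ω in {ω | qf (rvCdf μ X) α ≤ X ω}, Y ω ∂μ) /
    (μ {ω | qf (rvCdf μ X) α ≤ X ω}).toReal

open ProbabilityTheory Filter Topology

lemma apply_qf_of_continuous {F : ℝ → ℝ} (hF : Continuous F) {α : ℝ}
    (hbot : ∀ᶠ x in atBot, F x < α) (htop : ∃ x, α ≤ F x) : F (qf F α) = α := by
  obtain ⟨a, ha⟩ := eventually_atBot.mp hbot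
  have hlow : a ∈ lowerBounds {x | α ≤ F x} := fun x hx =>
    le_of_not_gt fun hxa => (ha x hxa.le).not_ge hx
  have hmem : α ≤ F (qf F α) := (isClosed_le continuous_const hF).csInf_mem htop ⟨a, hlow⟩
  obtain ⟨x, hx, hFx⟩ := intermediate_value_Icc (le_csInf htop hlow) hF.continuousOn
    ⟨(ha a le_rfl).le, hmem⟩
  have hqx : qf F α ≤ x := csInf_le ⟨a, hlow⟩ hFx.ge
  rwa [le_antisymm hx.2 hqx] at hFx

lemma lintegral_ofReal_eq_lintegral_measure_Ioi (m : Measure ℝ) :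
    ∫⁻ x, ENNReal.ofReal x ∂m = ∫⁻ t in Ioi 0, m (Ioi t) := by
  have h := lintegral_eq_lintegral_meas_lt m (f := fun x => max x 0)
    (ae_of_all _ fun x => le_max_right x 0) (measurable_id.max measurable_const).aemeasurable
  simp only [ENNReal.ofReal_max, ENNReal.ofReal_zero, max_zero] at h
  rw [h]
  refine setLIntegral_congr_fun measurableSet_Ioi fun t ht => congrArg m ?_
  ext x
  simp [not_lt_of_gt (mem_Ioi.mp ht)]

lemma lintegral_ofReal_neg_eq_lintegral_measure_Iic (m : Measure ℝ) :
    ∫⁻ x, ENNReal.ofReal (-x) ∂m = ∫⁻ t in Ioi 0, m (Iic (-t)) := by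
  have h := lintegral_eq_lintegral_meas_le m (f := fun x => max (-x) 0)
    (ae_of_all _ fun x => le_max_right (-x) 0) (measurable_neg.max measurable_const).aemeasurable
  simp only [ENNReal.ofReal_max, ENNReal.ofReal_zero, max_zero] at h
  rw [h]
  refine setLIntegral_congr_fun measurableSet_Ioi fun t ht => congrArg m ?_
  ext x
  simp [not_le_of_gt (mem_Ioi.mp ht), le_neg]

lemma integral_id_le_of_measure_Iic_le {m m' : Measure ℝ} [IsFiniteMeasure m]
    [IsFiniteMeasure m'] (hm : Integrable (fun x => x) m) (hm' : Integrable (fun x => x) m')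
    (huniv : m univ = m' univ) (hIic : ∀ t, m' (Iic t) ≤ m (Iic t)) :
    ∫ x, x ∂m ≤ ∫ x, x ∂m' := by
  have hIoi : ∀ t, m (Ioi t) ≤ m' (Ioi t) := fun t => by
    rw [← compl_Iic, measure_compl measurableSet_Iic (measure_ne_top _ _),
      measure_compl measurableSet_Iic (measure_ne_top _ _), huniv]
    exact tsub_le_tsub_left (hIic t) _
  rw [integral_eq_lintegral_pos_part_sub_lintegral_neg_part hm,
    integral_eq_lintegral_pos_part_sub_lintegral_neg_part hm']
  refine sub_le_sub (ENNReal.toReal_mono hm'.lintegral_lt_top.ne ?_)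
    (ENNReal.toReal_mono hm.neg.lintegral_lt_top.ne ?_)
  · rw [lintegral_ofReal_eq_lintegral_measure_Ioi, lintegral_ofReal_eq_lintegral_measure_Ioi]
    exact lintegral_mono fun t => hIoi t
  · rw [lintegral_ofReal_neg_eq_lintegral_measure_Iic,
      lintegral_ofReal_neg_eq_lintegral_measure_Iic]
    exact lintegral_mono fun t => hIic (-t)

lemma setIntegral_le_of_measure_inter_le {Ω Ω' : Type*} [MeasurableSpace Ω]
    [MeasurableSpace Ω'] {μ : Measure Ω} {ν : Measure Ω'} [IsFiniteMeasure μ] [IsFiniteMeasure ν]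
    {Y : Ω → ℝ} {Y' : Ω' → ℝ} (hY : Integrable Y μ) (hY' : Integrable Y' ν)
    {A : Set Ω} {A' : Set Ω'} (hmass : μ A = ν A')
    (hcdf : ∀ t, ν ({ω | Y' ω ≤ t} ∩ A') ≤ μ ({ω | Y ω ≤ t} ∩ A)) :
    ∫ ω in A, Y ω ∂μ ≤ ∫ ω in A', Y' ω ∂ν := by
  have hYA : AEMeasurable Y (μ.restrict A) := hY.aemeasurable.restrict
  have hYA' : AEMeasurable Y' (ν.restrict A') := hY'.aemeasurable.restrict
  rw [← integral_map (f := fun x => x) hYA aestronglyMeasurable_id,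
    ← integral_map (f := fun x => x) hYA' aestronglyMeasurable_id]
  refine integral_id_le_of_measure_Iic_le
    ((integrable_map_measure aestronglyMeasurable_id hYA).mpr hY.restrict)
    ((integrable_map_measure aestronglyMeasurable_id hYA').mpr hY'.restrict) ?_ fun t => ?_
  · rw [Measure.map_apply_of_aemeasurable hYA MeasurableSet.univ,
      Measure.map_apply_of_aemeasurable hYA' MeasurableSet.univ]
    simpa using hmass
  · rw [Measure.map_apply_of_aemeasurable hYA measurableSet_Iic,
      Measure.map_apply_of_aemeasurable hYA' measurableSet_Iic,
      Measure.restrict_apply₀ (hYA.nullMeasurable measurableSet_Iic),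
      Measure.restrict_apply₀ (hYA'.nullMeasurable measurableSet_Iic)]
    exact hcdf t

section Distribution

variable {Ω : Type*} [MeasurableSpace Ω] {μ : Measure Ω} [IsProbabilityMeasure μ] {X : Ω → ℝ}

lemma rvCdf_eq_cdf_map (hX : AEMeasurable X μ) : rvCdf μ X = cdf (μ.map X) := by
  have := Measure.isProbabilityMeasure_map hX
  ext x
  rw [cdf_eq_real, measureReal_def, Measure.map_apply_of_aemeasurable hX measurableSet_Iic]
  rfl

lemma rvCdf_qf (hX : AEMeasurable X μ) (hcont : Continuous (rvCdf μ X)) {α : ℝ}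
    (hα : α ∈ Ioo (0 : ℝ) 1) : rvCdf μ X (qf (rvCdf μ X) α) = α := by
  rw [rvCdf_eq_cdf_map hX] at hcont ⊢
  exact apply_qf_of_continuous hcont ((tendsto_cdf_atBot _).eventually (eventually_lt_nhds hα.1))
    ((tendsto_cdf_atTop _).eventually (eventually_ge_nhds hα.2)).exists

lemma measure_setOf_eq_eq_zero (hX : AEMeasurable X μ) (hcont : Continuous (rvCdf μ X))
    (q : ℝ) : μ {ω | X ω = q} = 0 := by
  have := Measure.isProbabilityMeasure_map hX
  rw [rvCdf_eq_cdf_map hX] at hcont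
  have h := (cdf (μ.map X)).measure_singleton q
  rwa [measure_cdf, hcont.continuousWithinAt.leftLim_eq, sub_self, ENNReal.ofReal_zero,
    Measure.map_apply_of_aemeasurable hX (measurableSet_singleton q)] at h

lemma measure_setOf_le (hX : AEMeasurable X μ) (hcont : Continuous (rvCdf μ X)) (q : ℝ) :
    μ {ω | q ≤ X ω} = ENNReal.ofReal (1 - rvCdf μ X q) := by
  have := Measure.isProbabilityMeasure_map hX
  rw [rvCdf_eq_cdf_map hX] at hcont ⊢
  have h := (cdf (μ.map X)).measure_Ici (tendsto_cdf_atTop _) q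
  rwa [measure_cdf, hcont.continuousWithinAt.leftLim_eq,
    Measure.map_apply_of_aemeasurable hX measurableSet_Ici] at h

lemma measure_inter_setOf_le_add (hX : AEMeasurable X μ) (hcont : Continuous (rvCdf μ X))
    (B : Set Ω) (q : ℝ) : μ (B ∩ {ω | q ≤ X ω}) + μ (B ∩ {ω | X ω ≤ q}) = μ B := by
  have hae : {ω | q ≤ X ω} =ᵐ[μ] {ω | X ω ≤ q}ᶜ := by
    filter_upwards [measure_eq_zero_iff_ae_notMem.mp (measure_setOf_eq_eq_zero hX hcont q)]
      with ω hω
    exact propext ⟨fun h => not_le.mpr (h.lt_of_ne' hω), fun h => (not_le.mp h).le⟩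
  rw [measure_congr ((ae_eq_refl B).inter hae), add_comm]
  exact measure_inter_add_sdiff₀ B (hX.nullMeasurable measurableSet_Iic)

lemma MES_eq_setIntegral_div (hX : AEMeasurable X μ) (hcont : Continuous (rvCdf μ X))
    (Y : Ω → ℝ) {α : ℝ} (hα : α ∈ Ioo (0 : ℝ) 1) :
    MES μ X Y α = (∫ ω in {ω | qf (rvCdf μ X) α ≤ X ω}, Y ω ∂μ) / (1 - α) := by
  rw [MES, measure_setOf_le hX hcont, rvCdf_qf hX hcont hα,
    ENNReal.toReal_ofReal (sub_nonneg.mpr hα.2.le)]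

lemma toReal_measure_inter_setOf_qf_le {Y : Ω → ℝ} {C : ℝ → ℝ → ℝ}
    (hX : AEMeasurable X μ) (hcont : Continuous (rvCdf μ X))
    (hSklar : ∀ x y, (μ {ω | X ω ≤ x ∧ Y ω ≤ y}).toReal = C (rvCdf μ X x) (rvCdf μ Y y))
    {α : ℝ} (hα : α ∈ Ioo (0 : ℝ) 1) (t : ℝ) :
    (μ ({ω | Y ω ≤ t} ∩ {ω | qf (rvCdf μ X) α ≤ X ω})).toReal
      = rvCdf μ Y t - C α (rvCdf μ Y t) := by
  have h := congrArg ENNReal.toReal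
    (measure_inter_setOf_le_add hX hcont {ω | Y ω ≤ t} (qf (rvCdf μ X) α))
  rw [ENNReal.toReal_add (measure_ne_top _ _) (measure_ne_top _ _),
    inter_comm {ω | Y ω ≤ t} {ω | X ω ≤ qf (rvCdf μ X) α}] at h
  have hjoint := hSklar (qf (rvCdf μ X) α) t
  rw [rvCdf_qf hX hcont hα] at hjoint
  change _ + (μ {ω | X ω ≤ _ ∧ Y ω ≤ t}).toReal = rvCdf μ Y t at h
  linarith

end Distribution

theorem MES_mono_of_concordance_general
    {Ω Ω' : Type*} [MeasurableSpace Ω] [MeasurableSpace Ω']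
    (μ : Measure Ω) (ν : Measure Ω') [IsProbabilityMeasure μ] [IsProbabilityMeasure ν]
    (X Y : Ω → ℝ) (X' Y' : Ω' → ℝ)
    (hX : Measurable X) (hX' : Measurable X')
    (hIntY : Integrable Y μ) (hIntY' : Integrable Y' ν)
    (C C' : ℝ → ℝ → ℝ)
    (hSklar : ∀ x y, (μ {ω | X ω ≤ x ∧ Y ω ≤ y}).toReal = C (rvCdf μ X x) (rvCdf μ Y y))
    (hSklar' : ∀ x y, (ν {ω | X' ω ≤ x ∧ Y' ω ≤ y}).toReal =
      C' (rvCdf ν X' x) (rvCdf ν Y' y))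
    (hFXcont : Continuous (rvCdf μ X)) (hFX'cont : Continuous (rvCdf ν X'))
    (hYY' : rvCdf μ Y = rvCdf ν Y')
    (hCC' : ∀ u ∈ Icc (0:ℝ) 1, ∀ v ∈ Icc (0:ℝ) 1, C u v ≤ C' u v)
    (α : ℝ) (hα : α ∈ Ioo (0:ℝ) 1) :
    MES μ X Y α ≤ MES ν X' Y' α := by
  have hmass : μ {ω | qf (rvCdf μ X) α ≤ X ω} = ν {ω | qf (rvCdf ν X') α ≤ X' ω} := by
    rw [measure_setOf_le hX.aemeasurable hFXcont, measure_setOf_le hX'.aemeasurable hFX'cont,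
      rvCdf_qf hX.aemeasurable hFXcont hα, rvCdf_qf hX'.aemeasurable hFX'cont hα]
  have hcond : ∀ t, ν ({ω | Y' ω ≤ t} ∩ {ω | qf (rvCdf ν X') α ≤ X' ω})
      ≤ μ ({ω | Y ω ≤ t} ∩ {ω | qf (rvCdf μ X) α ≤ X ω}) := fun t => by
    rw [← ENNReal.toReal_le_toReal (measure_ne_top _ _) (measure_ne_top _ _),
      toReal_measure_inter_setOf_qf_le hX.aemeasurable hFXcont hSklar hα,
      toReal_measure_inter_setOf_qf_le hX'.aemeasurable hFX'cont hSklar' hα, ← hYY']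
    exact sub_le_sub_left (hCC' α (Ioo_subset_Icc_self hα) _
      ⟨ENNReal.toReal_nonneg, measureReal_le_one⟩) _
  rw [MES_eq_setIntegral_div hX.aemeasurable hFXcont Y hα,
    MES_eq_setIntegral_div hX'.aemeasurable hFX'cont Y' hα]
  exact div_le_div_of_nonneg_right (setIntegral_le_of_measure_inter_le hIntY hIntY' hmass hcond)
    (sub_nonneg.mpr hα.2.le)

/-- if (X,Y) and (X',Y') have copulas C ⪯ C' with continuous F_X, F_{X'},
equal integrable Y-margins, then MES_α(Y|X) ≤ MES_α(Y'|X') for all α ∈ (0,1). -/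
theorem MES_mono_of_concordance
    {Ω Ω' : Type*} [MeasurableSpace Ω] [MeasurableSpace Ω']
    (μ : Measure Ω) (ν : Measure Ω') [IsProbabilityMeasure μ] [IsProbabilityMeasure ν]
    (X Y : Ω → ℝ) (X' Y' : Ω' → ℝ)
    (hX : Measurable X) (hY : Measurable Y) (hX' : Measurable X') (hY' : Measurable Y')
    (hIntY : Integrable Y μ) (hIntY' : Integrable Y' ν)
    (C C' : ℝ → ℝ → ℝ)
    (hSklar : ∀ x y, (μ {ω | X ω ≤ x ∧ Y ω ≤ y}).toReal = C (rvCdf μ X x) (rvCdf μ Y y))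
    (hSklar' : ∀ x y, (ν {ω | X' ω ≤ x ∧ Y' ω ≤ y}).toReal =
      C' (rvCdf ν X' x) (rvCdf ν Y' y))
    (hFXcont : Continuous (rvCdf μ X)) (hFX'cont : Continuous (rvCdf ν X'))
    (hYY' : rvCdf μ Y = rvCdf ν Y')
    (hCC' : ∀ u ∈ Icc (0:ℝ) 1, ∀ v ∈ Icc (0:ℝ) 1, C u v ≤ C' u v)
    (α : ℝ) (hα : α ∈ Ioo (0:ℝ) 1) :
    MES μ X Y α ≤ MES ν X' Y' α :=
  MES_mono_of_concordance_general μ ν X Y X' Y' hX hX' hIntY hIntY' C C' hSklar hSklar' hFXcont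
    hFX'cont hYY' hCC' α hα
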